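/- arXiv:1512.01973 — 3 statements merged into one kernel-verified Lean document; each statement's English description precedes it below -/
import Mathlib

section
/- Let P and Q be finite connected posets with |P| = n ≥ 1 and |Q| = m ≥ 1. Consider the group ℤ^(P×Q) and the subgroup generated by the exponent vectors of the monomials u_φ = ∏_{p∈P} x_{p,φ(p)} for φ ∈ Hom(P,Q). This subgroup has rank n(m−1) + 1. -/
/-!
Fix `q₀ ∈ Q`. For `q ⋖ q'` in `Q` and `p ∈ P`, the two isotone maps sending `↑p`, respectively
`↑p \ {p}`, to `q'` and everything else to `q` differ only at `p`, so `e_{p,q'} - e_{p,q}` lies in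
the span; by connectivity of the Hasse diagram of `Q`, so does every `e_{p,q} - e_{p,q₀}`. Since
`u_φ - u_{q₀} = ∑ₚ (e_{p,φ p} - e_{p,q₀})`, the span has generators `u_{q₀}` and
`e_{p,q} - e_{p,q₀}` (`q ≠ q₀`). These are independent: the row sum at a fixed `p₀` together with
the coordinates `(p, q)`, `q ≠ q₀`, maps them to the standard basis of `ℤ^(1 + n(m-1))`.
-/

/-- The Hasse diagram graph of a poset: edges between pairs where one covers the other. -/
def hasseGraph (α : Type*) [PartialOrder α] : SimpleGraph α :=
  SimpleGraph.fromRel (fun x y => x ⋖ y)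

/-- The exponent vector in `ℤ^(P×Q)` of the monomial `u_φ = ∏_{p∈P} x_{p,φ(p)}` attached to an
isotone map `φ : P → Q`: the indicator of the graph `{(p, φ(p)) : p ∈ P}`. -/
def expVec {P Q : Type*} [PartialOrder P] [PartialOrder Q] [DecidableEq Q]
    (φ : P →o Q) : P × Q → ℤ :=
  fun pq => if φ pq.1 = pq.2 then 1 else 0

abbrev expVecSpan (P Q : Type*) [PartialOrder P] [PartialOrder Q] [DecidableEq Q] :
    Submodule ℤ (P × Q → ℤ) :=
  Submodule.span ℤ (Set.range (expVec : (P →o Q) → (P × Q → ℤ)))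

section

variable {P Q : Type*} [PartialOrder P] [PartialOrder Q]

open Classical in
noncomputable def OrderHom.piecewise {U : Set P} (hU : IsUpperSet U) {q q' : Q} (h : q ≤ q') :
    P →o Q where
  toFun x := if x ∈ U then q' else q
  monotone' a b hab := by
    dsimp only
    split_ifs with ha hb
    exacts [le_rfl, absurd (hU hab ha) hb, h, le_rfl]

open Classical in
theorem OrderHom.piecewise_apply {U : Set P} (hU : IsUpperSet U) {q q' : Q} (h : q ≤ q') (x : P) :
    OrderHom.piecewise hU h x = if x ∈ U then q' else q :=
  rfl

variable [DecidableEq P] [DecidableEq Q]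

variable (Q) in
def expVecSpanBasis (q₀ : Q) : Option (P × {q // q ≠ q₀}) → (P × Q → ℤ)
  | none => expVec (OrderHom.const P q₀)
  | some (p, q) => Pi.single (p, (q : Q)) 1 - Pi.single (p, q₀) 1

section Independence

variable [Fintype Q]

def rowSumCoords (p₀ : P) (q₀ : Q) : (P × Q → ℤ) →ₗ[ℤ] (Option (P × {q // q ≠ q₀}) → ℤ) :=
  LinearMap.pi fun
    | none => ∑ q, LinearMap.proj (p₀, q)
    | some (p, q) => LinearMap.proj (p, (q : Q))

theorem rowSumCoords_comp_expVecSpanBasis (p₀ : P) (q₀ : Q) :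
    rowSumCoords p₀ q₀ ∘ expVecSpanBasis Q q₀ = fun o => Pi.single o 1 := by
  ext (_ | ⟨p, q, hq⟩) (_ | ⟨p', q', hq'⟩) <;>
    simp [rowSumCoords, expVecSpanBasis, expVec, Pi.single_apply, ite_and, eq_comm (a := q₀), *]

theorem linearIndependent_expVecSpanBasis (p₀ : P) (q₀ : Q) :
    LinearIndependent ℤ (expVecSpanBasis Q q₀ : _ → (P × Q → ℤ)) :=
  .of_comp (rowSumCoords p₀ q₀) <| by
    rw [rowSumCoords_comp_expVecSpanBasis]
    exact Pi.linearIndependent_single_one _ _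

end Independence

variable [Fintype P]

theorem expVec_eq_sum (φ : P →o Q) : expVec φ = ∑ p, Pi.single (p, φ p) 1 := by
  ext ⟨x, y⟩
  simp [expVec, Finset.sum_apply, Pi.single_apply, ite_and, eq_comm]

theorem expVec_sub_expVec (φ ψ : P →o Q) :
    expVec φ - expVec ψ = ∑ p, (Pi.single (p, φ p) 1 - Pi.single (p, ψ p) 1) := by
  rw [expVec_eq_sum, expVec_eq_sum, Finset.sum_sub_distrib]

theorem single_sub_single_mem_expVecSpan_of_le (p : P) {q q' : Q} (h : q ≤ q') :
    Pi.single (p, q') 1 - Pi.single (p, q) 1 ∈ expVecSpan P Q := by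
  have hdiff := expVec_sub_expVec (.piecewise (isUpperSet_Ici p) h)
    (.piecewise (isUpperSet_Ioi p) h)
  rw [Finset.sum_eq_single p (fun x _ hx => ?_) (by simp)] at hdiff
  · simp only [OrderHom.piecewise_apply, Set.mem_Ici, Set.mem_Ioi, le_refl, lt_irrefl, if_true,
      if_false] at hdiff
    rw [← hdiff]
    exact sub_mem (Submodule.subset_span ⟨_, rfl⟩) (Submodule.subset_span ⟨_, rfl⟩)
  · have hagree :
        OrderHom.piecewise (isUpperSet_Ici p) h x = OrderHom.piecewise (isUpperSet_Ioi p) h x := by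
      rw [OrderHom.piecewise_apply, OrderHom.piecewise_apply, Set.mem_Ici, Set.mem_Ioi,
        hx.symm.le_iff_lt]
    rw [hagree, sub_self]

theorem single_sub_single_mem_expVecSpan (hQ : (hasseGraph Q).Connected) (p : P) (q q' : Q) :
    Pi.single (p, q) 1 - Pi.single (p, q') 1 ∈ expVecSpan P Q := by
  induction (SimpleGraph.reachable_iff_reflTransGen q q').1 (hQ q q') with
  | refl => simp
  | @tail b c _ hbc ih =>
    have hstep : Pi.single (p, b) 1 - Pi.single (p, c) 1 ∈ expVecSpan P Q := by
      rcases (SimpleGraph.fromRel_adj _ b c).1 hbc |>.2 with hcov | hcov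
      · rw [← neg_sub]
        exact neg_mem (single_sub_single_mem_expVecSpan_of_le p hcov.le)
      · exact single_sub_single_mem_expVecSpan_of_le p hcov.le
    rw [← sub_add_sub_cancel _ (Pi.single (p, b) 1)]
    exact add_mem ih hstep

theorem span_expVecSpanBasis (hQ : (hasseGraph Q).Connected) (q₀ : Q) :
    Submodule.span ℤ (Set.range (expVecSpanBasis Q q₀ : _ → (P × Q → ℤ))) = expVecSpan P Q := by
  apply le_antisymm <;> rw [Submodule.span_le]
  · rintro _ ⟨_ | ⟨p, q⟩, rfl⟩
    · exact Submodule.subset_span ⟨_, rfl⟩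
    · exact single_sub_single_mem_expVecSpan hQ p q q₀
  · rintro _ ⟨φ, rfl⟩
    have hsingle (p : P) (q : Q) : Pi.single (p, q) 1 - Pi.single (p, q₀) 1 ∈
        Submodule.span ℤ (Set.range (expVecSpanBasis Q q₀ : _ → (P × Q → ℤ))) := by
      by_cases hq : q = q₀
      · simp [hq]
      · exact Submodule.subset_span ⟨some (p, ⟨q, hq⟩), rfl⟩
    rw [← sub_add_cancel (expVec φ) (expVec (OrderHom.const P q₀)), expVec_sub_expVec]
    exact add_mem (Submodule.sum_mem _ fun p _ => hsingle p (φ p))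
      (Submodule.subset_span ⟨none, rfl⟩)

end

theorem stmt4_general {P Q : Type*} [Fintype P] [Fintype Q] [PartialOrder P] [PartialOrder Q]
    [DecidableEq Q]
    (hQ : (hasseGraph Q).Connected)
    (n m : ℕ) (hn : Fintype.card P = n) (hm : Fintype.card Q = m)
    (hn1 : 1 ≤ n) (hm1 : 1 ≤ m) :
    Module.finrank ℤ
      (Submodule.span ℤ (Set.range (expVec : (P →o Q) → (P × Q → ℤ)))) = n * (m - 1) + 1 := by
  classical
  obtain ⟨p₀⟩ : Nonempty P := Fintype.card_pos_iff.mp (by omega)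
  obtain ⟨q₀⟩ : Nonempty Q := Fintype.card_pos_iff.mp (by omega)
  change Module.finrank ℤ (expVecSpan P Q) = _
  rw [← span_expVecSpanBasis hQ q₀, finrank_span_eq_card (linearIndependent_expVecSpanBasis p₀ q₀)]
  simp [hn, hm]

/-- Let `P` and `Q` be finite connected posets with `|P| = n ≥ 1` and `|Q| = m ≥ 1`. The
subgroup of `ℤ^(P×Q)` generated by the exponent vectors of the monomials `u_φ`,
`φ ∈ Hom(P,Q)`, has rank `n(m−1) + 1`. -/
theorem stmt4 {P Q : Type*} [Fintype P] [Fintype Q] [PartialOrder P] [PartialOrder Q]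
    [DecidableEq Q]
    (hP : (hasseGraph P).Connected) (hQ : (hasseGraph Q).Connected)
    (n m : ℕ) (hn : Fintype.card P = n) (hm : Fintype.card Q = m)
    (hn1 : 1 ≤ n) (hm1 : 1 ≤ m) :
    Module.finrank ℤ
      (Submodule.span ℤ (Set.range (expVec : (P →o Q) → (P × Q → ℤ)))) = n * (m - 1) + 1 :=
  stmt4_general hQ n m hn hm hn1 hm1
end

section
/- Let Q be the poset cycle of length 3 with minimal elements a₁,a₂,a₃ and maximal elements b₁,b₂,b₃, relations a_i < b_i and a_i < b_{i+1} (b₄ = b₁). Consider the six isotone maps [2] → Q given by (a₁,b₁), (a₂,b₂), (a₃,b₃), (a₁,b₂), (a₂,b₃), (a₃,b₁). Then the multiset union of graphs of the first three maps equals that of the last three, i.e., u_{(a₁,b₁)}u_{(a₂,b₂)}u_{(a₃,b₃)} = u_{(a₁,b₂)}u_{(a₂,b₃)}u_{(a₃,b₁)} as monomials in the variables x_{p,q}, yet no pair (φ,ψ) from the first triple equals a pair from the second triple. -/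
/-- The poset cycle of length `ℓ`: minimal elements `aᵢ = Sum.inl i`, maximal elements
`bᵢ = Sum.inr i`, relations `aᵢ ≤ bᵢ` and `aᵢ ≤ b_{i+1}` (indices mod `ℓ`). -/
def cycleRel (ℓ : ℕ) : (Fin ℓ ⊕ Fin ℓ) → (Fin ℓ ⊕ Fin ℓ) → Prop
  | Sum.inl i, Sum.inl j => i = j
  | Sum.inr i, Sum.inr j => i = j
  | Sum.inl i, Sum.inr j => j = i ∨ (j : ℕ) = ((i : ℕ) + 1) % ℓ
  | Sum.inr _, Sum.inl _ => False

/-- Let `Q` be the poset cycle of length 3. The six maps `[2] → Q` given as pairs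
`(a₁,b₁), (a₂,b₂), (a₃,b₃)` and `(a₁,b₂), (a₂,b₃), (a₃,b₁)` are all isotone, the multiset
union of the graphs of the first three equals that of the last three (i.e.
`u_{(a₁,b₁)}u_{(a₂,b₂)}u_{(a₃,b₃)} = u_{(a₁,b₂)}u_{(a₂,b₃)}u_{(a₃,b₁)}`), yet no map of the
first triple equals a map of the second triple. -/
theorem stmt16 :
    (∀ i : Fin 3, cycleRel 3 (Sum.inl i) (Sum.inr i)) ∧
    (∀ i : Fin 3, cycleRel 3 (Sum.inl i) (Sum.inr (i + 1))) ∧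
    (({((0 : Fin 2), (Sum.inl 0 : Fin 3 ⊕ Fin 3)), (1, Sum.inr 0),
        (0, Sum.inl 1), (1, Sum.inr 1),
        (0, Sum.inl 2), (1, Sum.inr 2)} : Multiset (Fin 2 × (Fin 3 ⊕ Fin 3))) =
      ({((0 : Fin 2), (Sum.inl 0 : Fin 3 ⊕ Fin 3)), (1, Sum.inr 1),
        (0, Sum.inl 1), (1, Sum.inr 2),
        (0, Sum.inl 2), (1, Sum.inr 0)} : Multiset (Fin 2 × (Fin 3 ⊕ Fin 3)))) ∧
    (∀ i j : Fin 3,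
      ((Sum.inl i : Fin 3 ⊕ Fin 3), (Sum.inr i : Fin 3 ⊕ Fin 3)) ≠
        (Sum.inl j, Sum.inr (j + 1))) := by
  refine ⟨fun i => Or.inl rfl, fun i => ?_, by decide, by decide⟩
  fin_cases i <;> exact Or.inr rfl
end

section
/- Let P = [n] be a chain and Q a co-rooted tree, and order isotone maps φ : [n] → Q as sequences. Suppose φ, ψ : [n] → Q are isotone and there exists an index 2 ≤ i ≤ n with φ(i−1) ≤ ψ(i) and ψ(i−1) ≤ φ(i). Then the maps φ' and ψ' defined by φ' = (φ(1),...,φ(i−1), ψ(i),...,ψ(n)) and ψ' = (ψ(1),...,ψ(i−1), φ(i),...,φ(n)) are both isotone, and the multiset union of the graphs of φ' and ψ' equals the multiset union of the graphs of φ and ψ. -/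
lemma splice_mono {Q : Type*} [PartialOrder Q] {n : ℕ} (φ ψ : Fin n → Q)
    (hφ : Monotone φ) (hψ : Monotone ψ) (i : Fin n)
    (h1 : φ ⟨i.val - 1, lt_of_le_of_lt (Nat.sub_le _ _) i.isLt⟩ ≤ ψ i) :
    Monotone (fun j : Fin n => if j < i then φ j else ψ j) := by
  intro j k hjk
  by_cases hj : j < i <;> by_cases hk : k < i <;> simp only [hj, hk, if_true, if_false, if_pos, if_neg, not_false_iff]
  · exact hφ hjk
  · calc φ j ≤ φ ⟨i.val - 1, lt_of_le_of_lt (Nat.sub_le _ _) i.isLt⟩ := by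
          apply hφ; exact Nat.le_sub_one_of_lt hj
      _ ≤ ψ i := h1
      _ ≤ ψ k := hψ (not_lt.mp hk)
  · exact absurd (lt_of_le_of_lt hjk hk) hj
  · exact hψ hjk

/-- The exchange step for `P = [n]` a chain and `Q` a co-rooted tree (any two elements above a
common element are comparable). Suppose `φ, ψ : [n] → Q` are isotone and `2 ≤ i ≤ n` is an
index (here `i : Fin n` with `i.val ≥ 1`, so `i−1` makes sense) with `φ(i−1) ≤ ψ(i)` and
`ψ(i−1) ≤ φ(i)`. Then the maps `φ' = (φ(1),…,φ(i−1),ψ(i),…,ψ(n))` and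
`ψ' = (ψ(1),…,ψ(i−1),φ(i),…,φ(n))` are both isotone and the multiset union of their graphs
equals that of the graphs of `φ` and `ψ`. -/
theorem stmt17 {Q : Type*} [Fintype Q] [PartialOrder Q]
    (hQ : ∀ a b c : Q, a < b → a < c → b ≤ c ∨ c ≤ b)
    (n : ℕ) (φ ψ : Fin n → Q) (hφ : Monotone φ) (hψ : Monotone ψ)
    (i : Fin n) (hi : 1 ≤ i.val)
    (h1 : φ ⟨i.val - 1, lt_of_le_of_lt (Nat.sub_le _ _) i.isLt⟩ ≤ ψ i)
    (h2 : ψ ⟨i.val - 1, lt_of_le_of_lt (Nat.sub_le _ _) i.isLt⟩ ≤ φ i) :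
    Monotone (fun j : Fin n => if j < i then φ j else ψ j) ∧
    Monotone (fun j : Fin n => if j < i then ψ j else φ j) ∧
    Finset.univ.val.map (fun j : Fin n => (j, if j < i then φ j else ψ j)) +
        Finset.univ.val.map (fun j : Fin n => (j, if j < i then ψ j else φ j)) =
      Finset.univ.val.map (fun j : Fin n => (j, φ j)) +
        Finset.univ.val.map (fun j : Fin n => (j, ψ j)) := by
  refine ⟨splice_mono φ ψ hφ hψ i h1, splice_mono ψ φ hψ hφ i h2, ?_⟩
  have key : ∀ (s : Multiset (Fin n)),
      s.map (fun j => (j, if j < i then φ j else ψ j)) +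
        s.map (fun j => (j, if j < i then ψ j else φ j)) =
      s.map (fun j => (j, φ j)) + s.map (fun j => (j, ψ j)) := by
    intro s
    induction s using Multiset.induction with
    | empty => simp
    | cons a s ih =>
      simp only [Multiset.map_cons, Multiset.cons_add, Multiset.add_cons]
      by_cases h : a < i
      · simp [h, ih]
      · simp only [h, if_false, if_neg, not_false_iff]
        rw [Multiset.cons_swap, ih]
  exact key _
end
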